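/- (Correctness of the seminaïve addition loop started from a partial state.) Let Π be a Datalog program, E′ a dataset, and X, N sets of facts such that X ∪ N ⊆ mat(Π, E′), E′ ⊆ X ∪ N, and Π[X] ⊆ X ∪ N. Define Δ_0 = N \ X, X_0 = X, X_{k+1} = X_k ∪ Δ_k, and Δ_{k+1} = Π[X_{k+1} ∸ Δ_k] \ X_{k+1}. Then ⋃_{k≥0} X_k = mat(Π, E′). -/
import Mathlib


namespace Datalog

/-- An atom `P(t₁,…,tₖ)`: a predicate symbol applied to a list of terms, where
`Sum.inl v` denotes the variable `v` and `Sum.inr c` denotes the constant `c`. -/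
structure Atom where
  pred : ℕ
  args : List (ℕ ⊕ ℕ)
deriving DecidableEq

/-- A fact: a variable-free atom, i.e. a predicate applied to constants only. -/
structure Fact where
  pred : ℕ
  args : List ℕ
deriving DecidableEq

/-- Applying a substitution `σ` (a map from variables to constants) to an atom. -/
def Atom.subst (A : Atom) (σ : ℕ → ℕ) : Fact :=
  ⟨A.pred, A.args.map (Sum.elim σ id)⟩

/-- The set of variables occurring in an atom. -/
def Atom.vars (A : Atom) : Set ℕ := { v | Sum.inl v ∈ A.args }

/-- A Datalog rule: a head atom and a finite set of body atoms, which is safe: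
every variable of the head occurs in some body atom. -/
structure Rule where
  head : Atom
  body : Finset Atom
  safe : ∀ v ∈ head.vars, ∃ B ∈ body, v ∈ B.vars

/-- `r[I] = { h(rσ) | b(rσ) ⊆ I }`. -/
def Rule.eval (r : Rule) (I : Set Fact) : Set Fact :=
  { f | ∃ σ : ℕ → ℕ, (∀ B ∈ r.body, B.subst σ ∈ I) ∧ f = r.head.subst σ }

/-- `r[I ∸ Δ] = { h(rσ) | b(rσ) ⊆ I and b(rσ) ∩ Δ ≠ ∅ }`. -/
def Rule.evalDelta (r : Rule) (I Δ : Set Fact) : Set Fact :=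
  { f | ∃ σ : ℕ → ℕ, (∀ B ∈ r.body, B.subst σ ∈ I) ∧
        (∃ B ∈ r.body, B.subst σ ∈ Δ) ∧ f = r.head.subst σ }

/-- `Π[I] = ⋃_{r ∈ Π} r[I]`. -/
def progEval (P : Set Rule) (I : Set Fact) : Set Fact := ⋃ r ∈ P, r.eval I

/-- `Π[I ∸ Δ] = ⋃_{r ∈ Π} r[I ∸ Δ]`. -/
def progEvalDelta (P : Set Rule) (I Δ : Set Fact) : Set Fact := ⋃ r ∈ P, r.evalDelta I Δ

/-- `I_0 = E`, `I_{i+1} = I_i ∪ Π[I_i]`. -/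
def matSeq (P : Set Rule) (E : Set Fact) : ℕ → Set Fact
  | 0 => E
  | n + 1 => matSeq P E n ∪ progEval P (matSeq P E n)

/-- The materialisation `mat(Π, E) = ⋃_{i ≥ 0} I_i`. -/
def mat (P : Set Rule) (E : Set Fact) : Set Fact := ⋃ n, matSeq P E n

/-- The seminaïve state `(X_k, Δ_k)` started from the partial state `(X, N)`:
`X_0 = X`, `Δ_0 = N \ X`, `X_{k+1} = X_k ∪ Δ_k`,
`Δ_{k+1} = Π[X_{k+1} ∸ Δ_k] \ X_{k+1}`. -/
def semiFrom (P : Set Rule) (X N : Set Fact) : ℕ → Set Fact × Set Fact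
  | 0 => (X, N \ X)
  | k + 1 =>
      let s := semiFrom P X N k
      (s.1 ∪ s.2, progEvalDelta P (s.1 ∪ s.2) s.2 \ (s.1 ∪ s.2))

lemma Rule.eval_mono {r : Rule} {I J : Set Fact} (h : I ⊆ J) : r.eval I ⊆ r.eval J := by
  rintro f ⟨σ, hb, rfl⟩
  exact ⟨σ, fun B hB => h (hb B hB), rfl⟩

lemma progEval_mono {P : Set Rule} {I J : Set Fact} (h : I ⊆ J) :
    progEval P I ⊆ progEval P J := by
  intro f hf
  simp only [progEval, Set.mem_iUnion] at *
  obtain ⟨r, hr, hf⟩ := hf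
  exact ⟨r, hr, Rule.eval_mono h hf⟩

lemma matSeq_mono (P : Set Rule) (E : Set Fact) : Monotone (matSeq P E) :=
  monotone_nat_of_le_succ fun _ => Set.subset_union_left

lemma chain_body {C : ℕ → Set Fact} (hC : Monotone C) (s : Finset Atom) (σ : ℕ → ℕ)
    (h : ∀ B ∈ s, B.subst σ ∈ ⋃ k, C k) : ∃ k, ∀ B ∈ s, B.subst σ ∈ C k := by
  classical
  induction s using Finset.induction with
  | empty => exact ⟨0, by simp⟩
  | @insert A s hA ih =>
    obtain ⟨k, hk⟩ := ih (fun B hB => h B (Finset.mem_insert_of_mem hB))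
    obtain ⟨m, hm⟩ := Set.mem_iUnion.mp (h A (Finset.mem_insert_self A s))
    refine ⟨max k m, fun B hB => ?_⟩
    rcases Finset.mem_insert.mp hB with rfl | hB
    · exact hC (le_max_right k m) hm
    · exact hC (le_max_left k m) (hk B hB)

lemma progEval_iUnion_chain {P : Set Rule} {C : ℕ → Set Fact} (hC : Monotone C)
    (hstep : ∀ k, progEval P (C k) ⊆ ⋃ k, C k) :
    progEval P (⋃ k, C k) ⊆ ⋃ k, C k := by
  intro f hf
  simp only [progEval, Set.mem_iUnion] at hf
  obtain ⟨r, hr, σ, hb, rfl⟩ := hf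
  obtain ⟨k, hk⟩ := chain_body hC r.body σ hb
  exact hstep k (by simp only [progEval, Set.mem_iUnion]; exact ⟨r, hr, σ, hk, rfl⟩)

lemma mat_closed (P : Set Rule) (E : Set Fact) : progEval P (mat P E) ⊆ mat P E := by
  refine progEval_iUnion_chain (matSeq_mono P E) fun k => ?_
  intro f hf
  exact Set.mem_iUnion.mpr ⟨k + 1, Or.inr hf⟩

lemma semiFrom_succ (P : Set Rule) (X N : Set Fact) (k : ℕ) :
    semiFrom P X N (k + 1) =
      ((semiFrom P X N k).1 ∪ (semiFrom P X N k).2,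
        progEvalDelta P ((semiFrom P X N k).1 ∪ (semiFrom P X N k).2) (semiFrom P X N k).2
          \ ((semiFrom P X N k).1 ∪ (semiFrom P X N k).2)) := rfl

lemma semiFrom_mono (P : Set Rule) (X N : Set Fact) :
    Monotone fun k => (semiFrom P X N k).1 :=
  monotone_nat_of_le_succ fun k => by
    rw [semiFrom_succ]; exact Set.subset_union_left

lemma evalDelta_sub_eval {r : Rule} {I Δ : Set Fact} : r.evalDelta I Δ ⊆ r.eval I := by
  rintro f ⟨σ, hb, _, rfl⟩
  exact ⟨σ, hb, rfl⟩

lemma semiFrom_key (P : Set Rule) (X N : Set Fact)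
    (h3 : progEval P X ⊆ X ∪ N) (k : ℕ) :
    progEval P (semiFrom P X N k).1 ⊆ (semiFrom P X N (k + 2)).1 := by
  induction k with
  | zero =>
    have h01 : X ∪ N ⊆ (semiFrom P X N 1).1 := by
      rw [semiFrom_succ]
      show X ∪ N ⊆ X ∪ (N \ X)
      exact Set.union_diff_self.superset
    exact h3.trans (h01.trans (semiFrom_mono P X N (by omega : 1 ≤ 2)))
  | succ k ih =>
    intro f hf
    simp only [progEval, Set.mem_iUnion] at hf
    obtain ⟨r, hr, σ, hb, rfl⟩ := hf
    by_cases hall : ∀ B ∈ r.body, B.subst σ ∈ (semiFrom P X N k).1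
    · refine semiFrom_mono P X N (by omega : k + 2 ≤ k + 1 + 2) ?_
      exact ih (by simp only [progEval, Set.mem_iUnion]; exact ⟨r, hr, σ, hall, rfl⟩)
    · push_neg at hall
      obtain ⟨B, hB, hBX⟩ := hall
      have hBdelta : B.subst σ ∈ (semiFrom P X N k).2 := by
        have := hb B hB
        rw [semiFrom_succ] at this
        exact this.resolve_left hBX
      have hd : r.head.subst σ ∈
          progEvalDelta P (semiFrom P X N (k+1)).1 (semiFrom P X N k).2 := by
        simp only [progEvalDelta, Set.mem_iUnion]
        exact ⟨r, hr, σ, hb, ⟨B, hB, hBdelta⟩, rfl⟩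
      by_cases hmem : r.head.subst σ ∈ (semiFrom P X N (k+1)).1
      · exact semiFrom_mono P X N (by omega : k + 1 ≤ k + 1 + 2) hmem
      · refine semiFrom_mono P X N (by omega : k + 2 ≤ k + 1 + 2) ?_
        exact Or.inr ⟨hd, hmem⟩

/-- correctness of the seminaïve addition loop started from a
partial state: if `X ∪ N ⊆ mat(Π, E′)`, `E′ ⊆ X ∪ N` and `Π[X] ⊆ X ∪ N`, then
`⋃_k X_k = mat(Π, E′)`. -/
theorem seminaive_from_partial (P : Set Rule) (hP : P.Finite)
    (hne : ∀ r ∈ P, r.body.Nonempty)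
    (E' X N : Set Fact)
    (h1 : X ∪ N ⊆ mat P E') (h2 : E' ⊆ X ∪ N) (h3 : progEval P X ⊆ X ∪ N) :
    (⋃ k, (semiFrom P X N k).1) = mat P E' := by
  apply Set.Subset.antisymm
  · -- soundness
    have hsound : ∀ k, (semiFrom P X N k).1 ⊆ mat P E' ∧ (semiFrom P X N k).2 ⊆ mat P E' := by
      intro k
      induction k with
      | zero =>
        constructor
        · exact (Set.subset_union_left).trans h1
        · exact (Set.diff_subset).trans ((Set.subset_union_right).trans h1)
      | succ k ih =>
        rw [semiFrom_succ]
        have hX : (semiFrom P X N k).1 ∪ (semiFrom P X N k).2 ⊆ mat P E' :=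
          Set.union_subset ih.1 ih.2
        refine ⟨hX, ?_⟩
        refine (Set.diff_subset).trans ?_
        intro f hf
        simp only [progEvalDelta, Set.mem_iUnion] at hf
        obtain ⟨r, hr, hfd⟩ := hf
        apply mat_closed P E'
        simp only [progEval, Set.mem_iUnion]
        exact ⟨r, hr, Rule.eval_mono hX (evalDelta_sub_eval hfd)⟩
    exact Set.iUnion_subset fun k => (hsound k).1
  · -- completeness
    have hU : progEval P (⋃ k, (semiFrom P X N k).1) ⊆ ⋃ k, (semiFrom P X N k).1 := by
      refine progEval_iUnion_chain (semiFrom_mono P X N) fun k => ?_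
      exact (semiFrom_key P X N h3 k).trans
        (Set.subset_iUnion (fun k => (semiFrom P X N k).1) (k + 2))
    have hE : E' ⊆ ⋃ k, (semiFrom P X N k).1 := by
      have h01 : X ∪ N ⊆ (semiFrom P X N 1).1 := by
        rw [semiFrom_succ]
        show X ∪ N ⊆ X ∪ (N \ X)
        exact Set.union_diff_self.superset
      exact h2.trans (h01.trans (Set.subset_iUnion (fun k => (semiFrom P X N k).1) 1))
    have : ∀ n, matSeq P E' n ⊆ ⋃ k, (semiFrom P X N k).1 := by
      intro n
      induction n with
      | zero => exact hE
      | succ n ih => exact Set.union_subset ih ((progEval_mono ih).trans hU)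
    exact Set.iUnion_subset this

end Datalog
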